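/- Let e(n) and o(n) denote the number of even and odd 132-avoiding permutations of length n, respectively, and let M(x)=Σ_{n≥0}(e(n)−o(n))xⁿ. Then M(x)=1+x·C(x²), where C(x)=Σ_{n≥0}C_n xⁿ is the generating function for the Catalan numbers, satisfying C(x)=1+x·C(x)². -/

import Mathlib

/-- `π` contains the pattern `τ`: there is a strictly increasing choice of positions
on which `π` is order-isomorphic to `τ`. -/
def HasPatt {n k : ℕ} (π : Equiv.Perm (Fin n)) (τ : Equiv.Perm (Fin k)) : Prop :=
  ∃ f : Fin k → Fin n, StrictMono f ∧ ∀ i j : Fin k, τ i < τ j ↔ π (f i) < π (f j)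

/-- The pattern `132` as a permutation of `Fin 3` (0-indexed values `0, 2, 1`). -/
def patt132 : Equiv.Perm (Fin 3) := Equiv.swap 1 2

/-- The number of even `132`-avoiding permutations of length `n`. -/
noncomputable def Even132 (n : ℕ) : ℕ :=
  Nat.card {π : Equiv.Perm (Fin n) // Equiv.Perm.sign π = 1 ∧ ¬ HasPatt π patt132}

/-- The number of odd `132`-avoiding permutations of length `n`. -/
noncomputable def Odd132 (n : ℕ) : ℕ :=
  Nat.card {π : Equiv.Perm (Fin n) // Equiv.Perm.sign π = -1 ∧ ¬ HasPatt π patt132}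

open Equiv Equiv.Perm Finset
open scoped Classical

lemma hasPatt132_iff {n : ℕ} (π : Perm (Fin n)) :
    HasPatt π patt132 ↔
      ∃ i j k : Fin n, i < j ∧ j < k ∧ π i < π k ∧ π k < π j := by
  constructor
  · rintro ⟨f, hf, hiff⟩
    refine ⟨f 0, f 1, f 2, hf (by decide), hf (by decide), ?_, ?_⟩
    · exact (hiff 0 2).mp (by decide)
    · exact (hiff 2 1).mp (by decide)
  · rintro ⟨i, j, k, hij, hjk, h1, h2⟩
    refine ⟨![i, j, k], ?_, ?_⟩
    · intro a b hab
      fin_cases a <;> fin_cases b <;>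
        simp_all <;>
        first
          | exact hij
          | exact hjk
          | exact hij.trans hjk
    · intro a b
      fin_cases a <;> fin_cases b <;>
        simp [patt132, show (Equiv.swap 1 2 : Equiv.Perm (Fin 3)) 0 = 0 by decide] <;>
        first
          | exact h1.trans h2
          | exact h1
          | exact h2
          | exact h2.le
          | exact h1.le
          | exact (h1.trans h2).le

noncomputable def avSet (n : ℕ) : Finset (Perm (Fin n)) :=
  Finset.univ.filter (fun π => ¬ HasPatt π patt132)

noncomputable def sgsum (n : ℕ) : ℤ := ∑ π ∈ avSet n, (Perm.sign π : ℤ)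

section Decomp

variable (p q : ℕ)

/-- The block equivalence `Fin p ⊕ (Fin 1 ⊕ Fin q) ≃ Fin (p+q+1)`. -/
def eqv : (Fin p ⊕ (Fin 1 ⊕ Fin q)) ≃ Fin (p + q + 1) :=
  ((Equiv.refl (Fin p)).sumCongr finSumFinEquiv).trans
    (finSumFinEquiv.trans (finCongr (by omega)))

lemma eqv_inl (i : Fin p) : eqv p q (Sum.inl i) = ⟨i.val, by omega⟩ := by
  simp [eqv, Fin.ext_iff]

lemma eqv_mid : eqv p q (Sum.inr (Sum.inl 0)) = ⟨p, by omega⟩ := by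
  simp [eqv, Fin.ext_iff]

lemma eqv_inr (j : Fin q) : eqv p q (Sum.inr (Sum.inr j)) = ⟨p + 1 + j.val, by omega⟩ := by
  simp [eqv, Fin.ext_iff]; omega

lemma rotpow_apply (m k : ℕ) (x : Fin (m + 1)) :
    ((finRotate (m + 1)) ^ k) x = ⟨(x.val + k) % (m + 1), Nat.mod_lt _ (Nat.succ_pos m)⟩ := by
  induction k generalizing x with
  | zero => simp [Fin.ext_iff, Nat.mod_eq_of_lt x.isLt]
  | succ k ih =>
    rw [pow_succ, Perm.mul_apply, finRotate_succ_apply, ih]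
    have h1 : ((x + 1 : Fin (m+1))).val = (x.val + 1) % (m + 1) := by
      simp [Fin.add_def]
    simp only [Fin.ext_iff, h1, Nat.mod_add_mod]
    congr 1
    omega

/-- Building a permutation of `Fin (p+q+1)` from `L` on the first `p` positions
(shifted up by `q` in values), the max at position `p`, and `R` afterwards. -/
def Phi (L : Perm (Fin p)) (R : Perm (Fin q)) : Perm (Fin (p + q + 1)) :=
  (finRotate (p + q + 1)) ^ q *
    ((eqv p q).permCongr (Equiv.sumCongr L (Equiv.sumCongr (Equiv.refl (Fin 1)) R)))

variable (L : Perm (Fin p)) (R : Perm (Fin q))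

lemma Phi_apply_left (x : Fin (p + q + 1)) (hx : x.val < p) :
    Phi p q L R x = ⟨q + (L ⟨x.val, hx⟩).val, by omega⟩ := by
  have hsymm : (eqv p q).symm x = Sum.inl ⟨x.val, hx⟩ := by
    rw [Equiv.symm_apply_eq, eqv_inl]
  rw [Phi, Perm.mul_apply, Equiv.permCongr_apply, hsymm]
  simp only [Equiv.sumCongr_apply, Sum.map_inl]
  rw [eqv_inl, rotpow_apply]
  have hL : (L ⟨x.val, hx⟩).val < p := Fin.isLt _
  simp only [Fin.ext_iff]
  rw [Nat.mod_eq_of_lt (by omega)]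
  omega

lemma Phi_apply_mid (x : Fin (p + q + 1)) (hx : x.val = p) :
    Phi p q L R x = ⟨p + q, by omega⟩ := by
  have hsymm : (eqv p q).symm x = Sum.inr (Sum.inl 0) := by
    rw [Equiv.symm_apply_eq, eqv_mid]; exact Fin.ext hx
  rw [Phi, Perm.mul_apply, Equiv.permCongr_apply, hsymm]
  simp only [Equiv.sumCongr_apply, Sum.map_inr, Sum.map_inl, Equiv.refl_apply]
  rw [eqv_mid, rotpow_apply]
  simp only [Fin.ext_iff]
  rw [Nat.mod_eq_of_lt (by omega)]

lemma Phi_apply_right (x : Fin (p + q + 1)) (hx : p < x.val) :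
    Phi p q L R x = ⟨(R ⟨x.val - (p + 1), by omega⟩).val, by omega⟩ := by
  have hsymm : (eqv p q).symm x = Sum.inr (Sum.inr ⟨x.val - (p + 1), by omega⟩) := by
    rw [Equiv.symm_apply_eq, eqv_inr]
    exact Fin.ext (by simp; omega)
  rw [Phi, Perm.mul_apply, Equiv.permCongr_apply, hsymm]
  simp only [Equiv.sumCongr_apply, Sum.map_inr]
  rw [eqv_inr, rotpow_apply]
  have hR : (R ⟨x.val - (p + 1), by omega⟩).val < q := Fin.isLt _
  simp only [Fin.ext_iff]
  have : p + 1 + (R ⟨x.val - (p + 1), by omega⟩).val + q = (p + q + 1) + (R ⟨x.val - (p + 1), by omega⟩).val := by omega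
  rw [this, Nat.add_mod_left, Nat.mod_eq_of_lt (by omega)]

end Decomp

section Decomp2

variable (p q : ℕ) (L : Perm (Fin p)) (R : Perm (Fin q))

lemma sign_Phi : sign (Phi p q L R) = ((-1 : ℤˣ) ^ (p + q)) ^ q * sign L * sign R := by
  rw [Phi, map_mul, map_pow, sign_finRotate, sign_permCongr, sign_sumCongr, sign_sumCongr,
    sign_refl, one_mul, mul_assoc, Nat.add_sub_cancel]

lemma Phi_hasPatt_iff :
    HasPatt (Phi p q L R) patt132 ↔ HasPatt L patt132 ∨ HasPatt R patt132 := by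
  constructor
  · rw [hasPatt132_iff]
    rintro ⟨a, b, c, hab, hbc, h1, h2⟩
    rw [Fin.lt_def] at hab hbc h1 h2
    -- `a` cannot be the max position or after it unless everything is after
    rcases lt_trichotomy a.val p with ha | ha | ha
    · -- a in the left block
      have hc : c.val < p := by
        by_contra hc
        push_neg at hc
        rcases eq_or_lt_of_le hc with hc' | hc'
        · -- c is the max position: π c = top, contradicts h2
          rw [Phi_apply_mid p q L R c hc'.symm] at h2
          have := (Phi p q L R b).isLt
          simp at h2; omega
        · -- c in the right block: value < q ≤ value at a
          rw [Phi_apply_left p q L R a ha] at h1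
          rw [Phi_apply_right p q L R c hc'] at h1
          simp at h1
          omega
      have hb : b.val < p := lt_trans hbc hc
      left
      rw [hasPatt132_iff]
      refine ⟨⟨a.val, ha⟩, ⟨b.val, hb⟩, ⟨c.val, hc⟩, Fin.mk_lt_mk.mpr hab,
        Fin.mk_lt_mk.mpr hbc, ?_, ?_⟩
      · rw [Phi_apply_left p q L R a ha, Phi_apply_left p q L R c hc] at h1
        simp at h1
        rw [Fin.lt_def]
        omega
      · rw [Phi_apply_left p q L R c hc, Phi_apply_left p q L R b hb] at h2
        simp at h2
        rw [Fin.lt_def]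
        omega
    · -- a is the max position: π a is the top value, h1 impossible
      exfalso
      rw [Phi_apply_mid p q L R a ha] at h1
      have := (Phi p q L R c).isLt
      simp at h1; omega
    · -- a in the right block, hence so are b and c
      have hb : p < b.val := lt_trans ha hab
      have hc : p < c.val := lt_trans hb hbc
      right
      rw [hasPatt132_iff]
      refine ⟨⟨a.val - (p+1), by omega⟩, ⟨b.val - (p+1), by omega⟩, ⟨c.val - (p+1), by omega⟩,
        by rw [Fin.lt_def]; simp; omega, by rw [Fin.lt_def]; simp; omega, ?_, ?_⟩
      · rw [Phi_apply_right p q L R a ha, Phi_apply_right p q L R c hc] at h1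
        simp at h1
        rw [Fin.lt_def]
        exact h1
      · rw [Phi_apply_right p q L R c hc, Phi_apply_right p q L R b hb] at h2
        simp at h2
        rw [Fin.lt_def]
        exact h2
  · rintro (hL | hR) <;> rw [hasPatt132_iff] at *
    · obtain ⟨i, j, k, hij, hjk, h1, h2⟩ := hL
      have hi : (i : ℕ) < p + q + 1 := by omega
      have hj : (j : ℕ) < p + q + 1 := by omega
      have hk : (k : ℕ) < p + q + 1 := by omega
      rw [Fin.lt_def] at hij hjk h1 h2
      refine ⟨⟨i.val, hi⟩, ⟨j.val, hj⟩, ⟨k.val, hk⟩, Fin.mk_lt_mk.mpr hij,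
        Fin.mk_lt_mk.mpr hjk, ?_, ?_⟩
      · rw [Phi_apply_left p q L R ⟨i.val, hi⟩ i.isLt,
          Phi_apply_left p q L R ⟨k.val, hk⟩ k.isLt, Fin.mk_lt_mk]
        simp only [Fin.eta]
        omega
      · rw [Phi_apply_left p q L R ⟨k.val, hk⟩ k.isLt,
          Phi_apply_left p q L R ⟨j.val, hj⟩ j.isLt, Fin.mk_lt_mk]
        simp only [Fin.eta]
        omega
    · obtain ⟨i, j, k, hij, hjk, h1, h2⟩ := hR
      rw [Fin.lt_def] at hij hjk h1 h2
      have hb : ∀ x : Fin q, p + 1 + (x : ℕ) < p + q + 1 := fun x => by omega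
      have e1 : ∀ (x : Fin q) (h : p + 1 + (x : ℕ) - (p + 1) < q),
          (⟨p + 1 + (x : ℕ) - (p + 1), h⟩ : Fin q) = x := fun x h => Fin.ext (by simp)
      have key : ∀ x : Fin q,
          Phi p q L R ⟨p + 1 + (x : ℕ), hb x⟩ = ⟨((R x : Fin q) : ℕ), by omega⟩ := by
        intro x
        rw [Phi_apply_right p q L R ⟨p + 1 + (x : ℕ), hb x⟩ (by simp; omega)]
        congr 1
        rw [e1 x]
      refine ⟨⟨p + 1 + i.val, hb i⟩, ⟨p + 1 + j.val, hb j⟩, ⟨p + 1 + k.val, hb k⟩,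
        Fin.mk_lt_mk.mpr (by omega), Fin.mk_lt_mk.mpr (by omega), ?_, ?_⟩
      · rw [key i, key k, Fin.mk_lt_mk]
        omega
      · rw [key k, key j, Fin.mk_lt_mk]
        omega

end Decomp2

section Decomp3

variable (p q : ℕ)

/-- Extract the left factor from a permutation whose first `p` values lie in `[q, p+q)`. -/
noncomputable def PsiL (π : Perm (Fin (p + q + 1)))
    (h : ∀ i : Fin (p + q + 1), i.val < p → q ≤ (π i).val ∧ (π i).val < p + q) :
    Perm (Fin p) :=
  Equiv.ofBijective
    (fun i => ⟨(π ⟨i.val, by omega⟩).val - q, by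
      have := h ⟨i.val, by omega⟩ i.isLt
      omega⟩)
    (Finite.injective_iff_bijective.mp (by
      intro a b hab
      simp only [Fin.mk.injEq] at hab
      have ha := h ⟨a.val, by omega⟩ a.isLt
      have hb := h ⟨b.val, by omega⟩ b.isLt
      have : (π ⟨a.val, by omega⟩).val = (π ⟨b.val, by omega⟩).val := by omega
      have := π.injective (Fin.ext this)
      simpa [Fin.ext_iff] using this))

/-- Extract the right factor from a permutation whose last `q` values lie in `[0, q)`. -/
noncomputable def PsiR (π : Perm (Fin (p + q + 1)))
    (h : ∀ k : Fin (p + q + 1), p < k.val → (π k).val < q) :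
    Perm (Fin q) :=
  Equiv.ofBijective
    (fun j => ⟨(π ⟨p + 1 + j.val, by omega⟩).val, h ⟨p + 1 + j.val, by omega⟩ (by simp; omega)⟩)
    (Finite.injective_iff_bijective.mp (by
      intro a b hab
      simp only [Fin.mk.injEq] at hab
      have := π.injective (Fin.ext hab)
      simpa [Fin.ext_iff] using this))

lemma Phi_PsiL_PsiR (π : Perm (Fin (p + q + 1)))
    (hL : ∀ i : Fin (p + q + 1), i.val < p → q ≤ (π i).val ∧ (π i).val < p + q)
    (hR : ∀ k : Fin (p + q + 1), p < k.val → (π k).val < q)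
    (hmid : π ⟨p, by omega⟩ = ⟨p + q, by omega⟩) :
    Phi p q (PsiL p q π hL) (PsiR p q π hR) = π := by
  apply Equiv.ext
  intro x
  rcases lt_trichotomy x.val p with hx | hx | hx
  · rw [Phi_apply_left p q _ _ x hx]
    have hv := hL x hx
    apply Fin.ext
    simp only [PsiL, Equiv.ofBijective_apply]
    have hxe : (⟨(⟨x.val, hx⟩ : Fin p).val, by omega⟩ : Fin (p + q + 1)) = x := Fin.ext rfl
    rw [hxe]
    omega
  · rw [Phi_apply_mid p q _ _ x hx]
    have hxe : x = ⟨p, by omega⟩ := Fin.ext hx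
    rw [hxe, hmid]
  · rw [Phi_apply_right p q _ _ x hx]
    apply Fin.ext
    simp only [PsiR, Equiv.ofBijective_apply]
    have hxe : (⟨p + 1 + (⟨x.val - (p + 1), by omega⟩ : Fin q).val, by omega⟩ :
        Fin (p + q + 1)) = x := Fin.ext (by simp; omega)
    rw [hxe]

lemma PsiL_Phi (L : Perm (Fin p)) (R : Perm (Fin q)) (hL) (hR) :
    PsiL p q (Phi p q L R) hL = L ∧ PsiR p q (Phi p q L R) hR = R := by
  constructor
  · apply Equiv.ext
    intro i
    apply Fin.ext
    simp only [PsiL, Equiv.ofBijective_apply]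
    rw [Phi_apply_left p q L R ⟨i.val, by omega⟩ i.isLt]
    simp
  · apply Equiv.ext
    intro j
    apply Fin.ext
    simp only [PsiR, Equiv.ofBijective_apply]
    rw [Phi_apply_right p q L R ⟨p + 1 + j.val, by omega⟩ (by simp; omega)]
    have e1 : ∀ (h : p + 1 + (j : ℕ) - (p + 1) < q),
        (⟨p + 1 + (j : ℕ) - (p + 1), h⟩ : Fin q) = j := fun h => Fin.ext (by simp)
    simp only [e1]

end Decomp3

section Struct

variable (p q : ℕ)

lemma left_high (π : Perm (Fin (p + q + 1))) (hav : ¬ HasPatt π patt132)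
    (hmid : π ⟨p, by omega⟩ = ⟨p + q, by omega⟩) :
    ∀ i : Fin (p + q + 1), i.val < p → q ≤ (π i).val := by
  intro i hi
  by_contra hlow
  push_neg at hlow
  have hex : ∃ k : Fin (p + q + 1), p < k.val ∧ q ≤ (π k).val := by
    by_contra hall
    push_neg at hall
    have hsub : (Finset.univ.filter (fun k : Fin (p + q + 1) => p < k.val)).image π ⊆
        (Finset.univ.filter (fun v : Fin (p + q + 1) => v.val < q)).erase (π i) := by
      intro v hv
      simp only [Finset.mem_image, Finset.mem_filter, Finset.mem_univ, true_and] at hv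
      obtain ⟨k, hk, rfl⟩ := hv
      refine Finset.mem_erase.mpr ⟨?_, ?_⟩
      · intro he
        have h2 := π.injective he
        rw [Fin.ext_iff] at h2
        omega
      · simp only [Finset.mem_filter, Finset.mem_univ, true_and]
        exact hall k hk
    have hc1 : (Finset.univ.filter (fun k : Fin (p + q + 1) => p < k.val)) =
        Finset.Ioi (⟨p, by omega⟩ : Fin (p + q + 1)) := by
      ext k
      simp [Fin.lt_def]
    have hc2 : (Finset.univ.filter (fun v : Fin (p + q + 1) => v.val < q)) =
        Finset.Iio (⟨q, by omega⟩ : Fin (p + q + 1)) := by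
      ext v
      simp [Fin.lt_def]
    have hcard1 : ((Finset.univ.filter (fun k : Fin (p + q + 1) => p < k.val)).image π).card
        = q := by
      rw [Finset.card_image_of_injective _ π.injective, hc1, Fin.card_Ioi]
      simp
    have hmem : π i ∈ (Finset.univ.filter (fun v : Fin (p + q + 1) => v.val < q)) := by
      simp only [Finset.mem_filter, Finset.mem_univ, true_and]
      exact hlow
    have hcard2 :
        ((Finset.univ.filter (fun v : Fin (p + q + 1) => v.val < q)).erase (π i)).card
        = q - 1 := by
      rw [Finset.card_erase_of_mem hmem, hc2, Fin.card_Iio]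
    have := Finset.card_le_card hsub
    omega
  obtain ⟨k, hk, hkv⟩ := hex
  have hk2 : (π k).val < p + q := by
    by_contra hk2
    push_neg at hk2
    have hv : (π k).val = p + q := by have := (π k).isLt; omega
    have h2 : π k = ⟨p + q, by omega⟩ := Fin.ext hv
    have h3 := π.injective (h2.trans hmid.symm)
    have h4 : (k : ℕ) = p := by rw [h3]
    omega
  apply hav
  rw [hasPatt132_iff]
  refine ⟨i, ⟨p, by omega⟩, k, ?_, ?_, ?_, ?_⟩
  · rw [Fin.lt_def]; exact hi
  · rw [Fin.lt_def]; exact hk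
  · rw [Fin.lt_def]; omega
  · rw [hmid, Fin.lt_def]; exact hk2

lemma right_low (π : Perm (Fin (p + q + 1))) (hav : ¬ HasPatt π patt132)
    (hmid : π ⟨p, by omega⟩ = ⟨p + q, by omega⟩) :
    ∀ k : Fin (p + q + 1), p < k.val → (π k).val < q := by
  have hhigh := left_high p q π hav hmid
  have hAB : (Finset.univ.filter (fun i : Fin (p + q + 1) => i.val ≤ p)).image π ⊆
      Finset.univ.filter (fun v : Fin (p + q + 1) => q ≤ v.val) := by
    intro v hv
    simp only [Finset.mem_image, Finset.mem_filter, Finset.mem_univ, true_and] at hv ⊢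
    obtain ⟨a, ha, rfl⟩ := hv
    rcases lt_or_eq_of_le ha with ha' | ha'
    · exact hhigh a ha'
    · have : a = ⟨p, by omega⟩ := Fin.ext ha'
      rw [this, hmid]
      simp
  have hc1 : (Finset.univ.filter (fun i : Fin (p + q + 1) => i.val ≤ p)) =
      Finset.Iic (⟨p, by omega⟩ : Fin (p + q + 1)) := by
    ext k
    simp [Fin.le_def]
  have hc2 : (Finset.univ.filter (fun v : Fin (p + q + 1) => q ≤ v.val)) =
      Finset.Ici (⟨q, by omega⟩ : Fin (p + q + 1)) := by
    ext v
    simp [Fin.le_def]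
  have heq : (Finset.univ.filter (fun i : Fin (p + q + 1) => i.val ≤ p)).image π =
      Finset.univ.filter (fun v : Fin (p + q + 1) => q ≤ v.val) := by
    apply Finset.eq_of_subset_of_card_le hAB
    rw [Finset.card_image_of_injective _ π.injective, hc1, hc2, Fin.card_Iic, Fin.card_Ici]
    simp
  intro k hk
  by_contra hkv
  push_neg at hkv
  have : π k ∈ (Finset.univ.filter (fun i : Fin (p + q + 1) => i.val ≤ p)).image π := by
    rw [heq]
    simp only [Finset.mem_filter, Finset.mem_univ, true_and]
    exact hkv
  simp only [Finset.mem_image, Finset.mem_filter, Finset.mem_univ, true_and] at this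
  obtain ⟨a, ha, hak⟩ := this
  have := π.injective hak
  rw [Fin.ext_iff] at this
  omega

end Struct

section Fiber

variable (p q : ℕ)

lemma mem_fiber_iff (π : Perm (Fin (p + q + 1))) :
    π ∈ (avSet (p + q + 1)).filter
        (fun π => π.symm ⟨p + q, by omega⟩ = ⟨p, by omega⟩) ↔
      ¬ HasPatt π patt132 ∧ π ⟨p, by omega⟩ = ⟨p + q, by omega⟩ := by
  rw [Finset.mem_filter, avSet, Finset.mem_filter]
  simp only [Finset.mem_univ, true_and]
  constructor
  · rintro ⟨h1, h2⟩
    exact ⟨h1, by rw [← h2]; simp⟩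
  · rintro ⟨h1, h2⟩
    exact ⟨h1, by rw [← h2]; simp⟩

lemma fiber_hL (π : Perm (Fin (p + q + 1))) (hav : ¬ HasPatt π patt132)
    (hmid : π ⟨p, by omega⟩ = ⟨p + q, by omega⟩) :
    ∀ i : Fin (p + q + 1), i.val < p → q ≤ (π i).val ∧ (π i).val < p + q := by
  intro i hi
  refine ⟨left_high p q π hav hmid i hi, ?_⟩
  by_contra hk2
  push_neg at hk2
  have hv : (π i).val = p + q := by have := (π i).isLt; omega
  have h2 : π i = ⟨p + q, by omega⟩ := Fin.ext hv
  have h3 := π.injective (h2.trans hmid.symm)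
  have h4 : (i : ℕ) = p := by rw [h3]
  omega

lemma fiber_sum (N p q : ℕ) (hN : N = p + q + 1) :
    ∑ π ∈ (avSet N).filter
        (fun π => π.symm ⟨p + q, by omega⟩ = ⟨p, by omega⟩), (Perm.sign π : ℤ)
      = ((-1 : ℤ) ^ (p + q)) ^ q * sgsum p * sgsum q := by
  subst hN
  have hrhs : ((-1 : ℤ) ^ (p + q)) ^ q * sgsum p * sgsum q
      = ∑ LR ∈ (avSet p) ×ˢ (avSet q),
          ((-1 : ℤ) ^ (p + q)) ^ q * (Perm.sign LR.1 : ℤ) * (Perm.sign LR.2 : ℤ) := by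
    rw [Finset.sum_product, sgsum, sgsum, mul_assoc, Finset.sum_mul_sum, Finset.mul_sum]
    apply Finset.sum_congr rfl
    intro L _
    rw [Finset.mul_sum]
    apply Finset.sum_congr rfl
    intro R _
    ring
  rw [hrhs]
  refine Finset.sum_bij'
    (fun π hπ => (PsiL p q π (fiber_hL p q π ((mem_fiber_iff p q π).mp hπ).1
        ((mem_fiber_iff p q π).mp hπ).2),
      PsiR p q π (right_low p q π ((mem_fiber_iff p q π).mp hπ).1
        ((mem_fiber_iff p q π).mp hπ).2)))
    (fun LR _ => Phi p q LR.1 LR.2) ?_ ?_ ?_ ?_ ?_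
  · -- maps into the product of avoiding sets
    intro π hπ
    obtain ⟨hav, hmid⟩ := (mem_fiber_iff p q π).mp hπ
    have hPhi := Phi_PsiL_PsiR p q π (fiber_hL p q π hav hmid) (right_low p q π hav hmid) hmid
    rw [Finset.mem_product]
    have : ¬ (HasPatt (PsiL p q π (fiber_hL p q π hav hmid)) patt132 ∨
        HasPatt (PsiR p q π (right_low p q π hav hmid)) patt132) := by
      rw [← Phi_hasPatt_iff, hPhi]
      exact hav
    push_neg at this
    constructor <;> rw [avSet, Finset.mem_filter] <;>
      exact ⟨Finset.mem_univ _, by tauto⟩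
  · -- Phi lands in the fiber
    intro LR hLR
    rw [Finset.mem_product] at hLR
    have h1 := hLR.1
    have h2 := hLR.2
    rw [avSet, Finset.mem_filter] at h1 h2
    show Phi p q LR.1 LR.2 ∈ _
    rw [mem_fiber_iff]
    constructor
    · rw [Phi_hasPatt_iff]
      push_neg
      exact ⟨h1.2, h2.2⟩
    · exact Phi_apply_mid p q LR.1 LR.2 _ rfl
  · -- left inverse
    intro π hπ
    obtain ⟨hav, hmid⟩ := (mem_fiber_iff p q π).mp hπ
    exact Phi_PsiL_PsiR p q π (fiber_hL p q π hav hmid) (right_low p q π hav hmid) hmid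
  · -- right inverse
    intro LR hLR
    have h1 : ∀ i : Fin (p + q + 1), i.val < p →
        q ≤ ((Phi p q LR.1 LR.2) i).val ∧ ((Phi p q LR.1 LR.2) i).val < p + q := by
      intro i hi
      rw [Phi_apply_left p q LR.1 LR.2 i hi]
      have := (LR.1 ⟨i.val, hi⟩).isLt
      simp
      omega
    have h2 : ∀ k : Fin (p + q + 1), p < k.val → ((Phi p q LR.1 LR.2) k).val < q := by
      intro k hk
      rw [Phi_apply_right p q LR.1 LR.2 k hk]
      simp
    exact Prod.ext (PsiL_Phi p q LR.1 LR.2 h1 h2).1 (PsiL_Phi p q LR.1 LR.2 h1 h2).2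
  · -- sign computation
    intro π hπ
    obtain ⟨hav, hmid⟩ := (mem_fiber_iff p q π).mp hπ
    have hPhi := Phi_PsiL_PsiR p q π (fiber_hL p q π hav hmid) (right_low p q π hav hmid) hmid
    have hs := sign_Phi p q (PsiL p q π (fiber_hL p q π hav hmid))
      (PsiR p q π (right_low p q π hav hmid))
    rw [hPhi] at hs
    have := congrArg (fun u : ℤˣ => (u : ℤ)) hs
    simpa using this

end Fiber

lemma sgsum_succ (n : ℕ) :
    sgsum (n + 1) =
      ∑ p ∈ Finset.range (n + 1), ((-1 : ℤ) ^ n) ^ (n - p) * sgsum p * sgsum (n - p) := by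
  have hmaps : ∀ π ∈ avSet (n + 1), π.symm (Fin.last n) ∈ (Finset.univ : Finset (Fin (n + 1))) :=
    fun _ _ => Finset.mem_univ _
  have hfib := Finset.sum_fiberwise_of_maps_to hmaps (fun π => (Perm.sign π : ℤ))
  rw [sgsum, ← hfib]
  have hterm : ∀ y : Fin (n + 1),
      (∑ π ∈ (avSet (n + 1)).filter (fun π => π.symm (Fin.last n) = y), (Perm.sign π : ℤ))
        = ((-1 : ℤ) ^ n) ^ (n - y.val) * sgsum y.val * sgsum (n - y.val) := by
    intro y
    have h := fiber_sum (n + 1) y.val (n - y.val) (by omega)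
    have e1 : (⟨y.val + (n - y.val), by omega⟩ : Fin (n + 1)) = Fin.last n :=
      Fin.ext (by simp; omega)
    have e2 : (⟨y.val, by omega⟩ : Fin (n + 1)) = y := Fin.ext rfl
    have e3 : y.val + (n - y.val) = n := by omega
    rw [e1, e2, e3] at h
    exact h
  rw [Finset.sum_congr rfl (fun y _ => hterm y)]
  exact Fin.sum_univ_eq_sum_range (fun p => ((-1 : ℤ) ^ n) ^ (n - p) * sgsum p * sgsum (n - p))
    (n + 1)

def tfun : ℕ → ℤ
  | 0 => 1
  | (n + 1) => if 2 ∣ n then (catalan (n / 2) : ℤ) else 0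

lemma tfun_odd (i : ℕ) : tfun (2 * i + 1) = (catalan i : ℤ) := by
  show (if 2 ∣ 2 * i then ((catalan (2 * i / 2) : ℤ)) else 0) = _
  rw [if_pos ⟨i, rfl⟩]
  have : 2 * i / 2 = i := by omega
  rw [this]

lemma tfun_even_pos (i : ℕ) : tfun (2 * i + 2) = 0 := by
  show (if 2 ∣ 2 * i + 1 then ((catalan ((2 * i + 1) / 2) : ℤ)) else 0) = 0
  rw [if_neg (by omega)]

lemma catalan_sum_range (k : ℕ) :
    ((catalan (k + 1) : ℤ)) = ∑ i ∈ Finset.range (k + 1), (catalan i : ℤ) * catalan (k - i) := by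
  rw [catalan_succ]
  push_cast
  rw [← Fin.sum_univ_eq_sum_range (fun i => (catalan i : ℤ) * catalan (k - i)) (k + 1)]

lemma tfun_rec (n : ℕ) :
    ∑ p ∈ Finset.range (n + 1), ((-1 : ℤ) ^ n) ^ (n - p) * tfun p * tfun (n - p)
      = tfun (n + 1) := by
  rcases Nat.even_or_odd n with hev | hodd
  · obtain ⟨m, hm⟩ := hev
    have h2 : n = 2 * m := by omega
    subst h2
    have hs : ((-1 : ℤ) ^ (2 * m)) = 1 := by rw [pow_mul]; norm_num
    simp only [hs, one_pow, one_mul]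
    rcases Nat.eq_zero_or_pos m with rfl | hm0
    · simp
      simp [tfun]
    · obtain ⟨k, rfl⟩ : ∃ k, m = k + 1 := ⟨m - 1, by omega⟩
      have ht : tfun (2 * (k + 1) + 1) = (catalan (k + 1) : ℤ) := tfun_odd (k + 1)
      rw [ht, catalan_sum_range k]
      rw [← Finset.sum_filter_of_ne
        (p := fun p => p % 2 = 1) (f := fun p => tfun p * tfun (2 * (k + 1) - p)) ?side]
      case side =>
        intro x hx hne
        rw [Finset.mem_range] at hx
        by_contra hx2
        apply hne
        rcases Nat.eq_zero_or_pos x with rfl | hx0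
        · show tfun 0 * tfun (2 * (k + 1) - 0) = 0
          rw [show 2 * (k + 1) - 0 = 2 * k + 2 from by omega, tfun_even_pos]
          ring
        · show tfun x * tfun (2 * (k + 1) - x) = 0
          rw [show tfun x = 0 from by
            rw [show x = 2 * ((x - 2) / 2) + 2 from by omega]
            exact tfun_even_pos _]
          ring
      refine (Finset.sum_nbij' (i := fun i => 2 * i + 1) (j := fun p => (p - 1) / 2)
        ?_ ?_ ?_ ?_ ?_).symm
      · intro i hi
        rw [Finset.mem_range] at hi
        rw [Finset.mem_filter, Finset.mem_range]
        beta_reduce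
        omega
      · intro p hp
        rw [Finset.mem_filter, Finset.mem_range] at hp
        rw [Finset.mem_range]
        beta_reduce
        omega
      · intro i hi
        beta_reduce
        omega
      · intro p hp
        rw [Finset.mem_filter] at hp
        beta_reduce
        omega
      · intro i hi
        rw [Finset.mem_range] at hi
        show (catalan i : ℤ) * catalan (k - i) = tfun (2 * i + 1) * tfun (2 * (k + 1) - (2 * i + 1))
        have e : 2 * (k + 1) - (2 * i + 1) = 2 * (k - i) + 1 := by omega
        rw [e, tfun_odd, tfun_odd]
  · obtain ⟨m, hm⟩ := hodd
    subst hm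
    have hterm : ∀ p ∈ Finset.range (2 * m + 1 + 1),
        ((-1 : ℤ) ^ (2 * m + 1)) ^ (2 * m + 1 - p) * tfun p * tfun (2 * m + 1 - p)
          = (if p = 0 then -(catalan m : ℤ) else 0)
            + (if p = 2 * m + 1 then (catalan m : ℤ) else 0) := by
      intro p hp
      rw [Finset.mem_range] at hp
      have hs : ((-1 : ℤ) ^ (2 * m + 1)) = -1 := Odd.neg_one_pow ⟨m, by omega⟩
      rw [hs]
      rcases eq_or_ne p 0 with rfl | hp0
      · rw [if_pos rfl, if_neg (by omega)]
        have h1 : (-1 : ℤ) ^ (2 * m + 1 - 0) = -1 := Odd.neg_one_pow ⟨m, by omega⟩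
        rw [h1, show (2 : ℕ) * m + 1 - 0 = 2 * m + 1 from rfl, tfun_odd m,
          show tfun 0 = 1 from rfl]
        ring
      · rcases eq_or_ne p (2 * m + 1) with rfl | hp1
        · rw [if_neg hp0, if_pos rfl]
          have e : 2 * m + 1 - (2 * m + 1) = 0 := by omega
          rw [e, pow_zero, tfun_odd m, show tfun 0 = 1 from rfl]
          ring
        · rw [if_neg hp0, if_neg hp1]
          have hzero : tfun p * tfun (2 * m + 1 - p) = 0 := by
            rcases Nat.even_or_odd p with ⟨k, hk⟩ | ⟨k, hk⟩
            · have hk' : p = 2 * (k - 1) + 2 := by omega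
              rw [hk', tfun_even_pos]
              ring
            · have hk' : 2 * m + 1 - p = 2 * (m - k - 1) + 2 := by omega
              rw [hk', tfun_even_pos]
              ring
          calc (-1 : ℤ) ^ (2 * m + 1 - p) * tfun p * tfun (2 * m + 1 - p)
              = (-1 : ℤ) ^ (2 * m + 1 - p) * (tfun p * tfun (2 * m + 1 - p)) := by ring
            _ = 0 := by rw [hzero]; ring
    rw [Finset.sum_congr rfl hterm, Finset.sum_add_distrib,
      Finset.sum_ite_eq' (Finset.range (2 * m + 1 + 1)) 0,
      Finset.sum_ite_eq' (Finset.range (2 * m + 1 + 1)) (2 * m + 1)]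
    rw [if_pos (by rw [Finset.mem_range]; omega), if_pos (by rw [Finset.mem_range]; omega)]
    have : tfun (2 * m + 1 + 1) = 0 := tfun_even_pos m
    rw [this]
    ring

lemma sgsum_zero : sgsum 0 = 1 := by
  have h0 : ∀ π : Perm (Fin 0), ¬ HasPatt π patt132 := by
    rintro π ⟨f, -, -⟩
    exact (f 0).elim0
  rw [sgsum]
  have hav : avSet 0 = Finset.univ := by
    rw [avSet, Finset.filter_true_of_mem (fun π _ => h0 π)]
  rw [hav]
  have h1 : ∀ π : Perm (Fin 0), (Perm.sign π : ℤ) = 1 := by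
    intro π
    have : π = 1 := Equiv.ext (fun x => x.elim0)
    rw [this, map_one]
    rfl
  rw [Finset.sum_congr rfl (fun π _ => h1 π)]
  simp [Finset.card_univ]

lemma sgsum_eq_tfun (n : ℕ) : sgsum n = tfun n := by
  induction n using Nat.strong_induction_on with
  | _ n ih =>
    match n with
    | 0 => exact sgsum_zero
    | (k + 1) =>
      rw [sgsum_succ k]
      rw [Finset.sum_congr rfl (fun p hp => by
        rw [ih p (by rw [Finset.mem_range] at hp; omega),
          ih (k - p) (by rw [Finset.mem_range] at hp; omega)])]
      exact tfun_rec k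

lemma sign_dichotomy {n : ℕ} (π : Perm (Fin n)) :
    Perm.sign π = -1 ↔ ¬ Perm.sign π = 1 := by
  rcases Int.units_eq_one_or (Perm.sign π) with h | h <;> rw [h] <;> decide

lemma diff_eq (n : ℕ) : (Even132 n : ℤ) - (Odd132 n : ℤ) = sgsum n := by
  have he : Even132 n = ((avSet n).filter (fun π => Perm.sign π = 1)).card := by
    rw [Even132, Nat.card_eq_fintype_card, Fintype.card_subtype, avSet, Finset.filter_filter]
    congr 1
    ext π
    simp [and_comm]
  have ho : Odd132 n = ((avSet n).filter (fun π => ¬ Perm.sign π = 1)).card := by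
    rw [Odd132, Nat.card_eq_fintype_card, Fintype.card_subtype, avSet, Finset.filter_filter]
    congr 1
    ext π
    simp only [Finset.mem_filter, Finset.mem_univ, true_and, sign_dichotomy]
    tauto
  have hA : ∑ π ∈ (avSet n).filter (fun π => Perm.sign π = 1), ((Perm.sign π : ℤˣ) : ℤ)
      = (((avSet n).filter (fun π => Perm.sign π = 1)).card : ℤ) := by
    rw [Finset.sum_congr rfl (fun π hπ => by
      rw [Finset.mem_filter] at hπ
      rw [hπ.2]
      rfl : ∀ π ∈ (avSet n).filter (fun π => Perm.sign π = 1),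
        ((Perm.sign π : ℤˣ) : ℤ) = 1)]
    rw [Finset.sum_const, nsmul_eq_mul, mul_one]
  have hB : ∑ π ∈ (avSet n).filter (fun π => ¬ Perm.sign π = 1), ((Perm.sign π : ℤˣ) : ℤ)
      = -(((avSet n).filter (fun π => ¬ Perm.sign π = 1)).card : ℤ) := by
    rw [Finset.sum_congr rfl (fun π hπ => by
      rw [Finset.mem_filter] at hπ
      rw [(sign_dichotomy π).mpr hπ.2]
      rfl : ∀ π ∈ (avSet n).filter (fun π => ¬ Perm.sign π = 1),
        ((Perm.sign π : ℤˣ) : ℤ) = -1)]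
    rw [Finset.sum_const]
    simp
  rw [he, ho, sgsum,
    ← Finset.sum_filter_add_sum_filter_not (avSet n) (fun π => Perm.sign π = 1)
      (fun π => ((Perm.sign π : ℤˣ) : ℤ)), hA, hB]
  ring

open PowerSeries

/-- Let `M(x) = Σ (e(n) − o(n)) xⁿ`, where `e(n)` and `o(n)` count even and odd
`132`-avoiding permutations of length `n`.  Then `M(x) = 1 + x·C(x²)`, where
`C(x) = Σ Cₙ xⁿ` is the Catalan generating function, which satisfies
`C(x) = 1 + x·C(x)²`. -/
theorem diff_gf_eq_one_add_X_mul_catalan_sq :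
    PowerSeries.mk (fun n => (Even132 n : ℚ) - (Odd132 n : ℚ)) =
      1 + PowerSeries.X *
        PowerSeries.mk (fun n => if 2 ∣ n then (catalan (n / 2) : ℚ) else 0) ∧
    PowerSeries.mk (fun n => (catalan n : ℚ)) =
      1 + PowerSeries.X * (PowerSeries.mk (fun n => (catalan n : ℚ))) ^ 2 := by
  have key : ∀ n : ℕ, (Even132 n : ℚ) - (Odd132 n : ℚ) = ((tfun n : ℤ) : ℚ) := by
    intro n
    have h1 := diff_eq n
    have h2 : ((Even132 n : ℤ) : ℚ) - ((Odd132 n : ℤ) : ℚ) = (((Even132 n : ℤ) - Odd132 n : ℤ) : ℚ) := by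
      push_cast
      ring
    rw [← sgsum_eq_tfun, ← h1]
    push_cast
    ring
  constructor
  · ext n
    cases n with
    | zero =>
      simp only [coeff_mk, key 0, map_add, PowerSeries.coeff_one]
      rw [show ((tfun 0 : ℤ) : ℚ) = 1 from rfl]
      have : (PowerSeries.coeff (R := ℚ) 0) (PowerSeries.X * PowerSeries.mk
          (fun n => if 2 ∣ n then (catalan (n / 2) : ℚ) else 0)) = 0 := by
        rw [PowerSeries.coeff_zero_eq_constantCoeff, map_mul, PowerSeries.constantCoeff_X]
        ring
      rw [this]
      norm_num
    | succ n =>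
      simp only [coeff_mk, key (n + 1), map_add, PowerSeries.coeff_one,
        PowerSeries.coeff_succ_X_mul, coeff_mk]
      rw [show tfun (n + 1) = if 2 ∣ n then (catalan (n / 2) : ℤ) else 0 from rfl]
      split_ifs <;> simp_all
  · ext n
    cases n with
    | zero =>
      simp only [coeff_mk, map_add, PowerSeries.coeff_one]
      have : (PowerSeries.coeff (R := ℚ) 0) (PowerSeries.X *
          (PowerSeries.mk (fun n => (catalan n : ℚ))) ^ 2) = 0 := by
        rw [PowerSeries.coeff_zero_eq_constantCoeff, map_mul, PowerSeries.constantCoeff_X]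
        ring
      rw [this]
      simp [catalan_zero]
    | succ n =>
      simp only [coeff_mk, map_add, PowerSeries.coeff_one, PowerSeries.coeff_succ_X_mul]
      rw [sq, PowerSeries.coeff_mul]
      simp only [coeff_mk]
      rw [catalan_succ']
      push_cast
      simp
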